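/- arXiv:1910.09093 — 2 statements merged into one kernel-verified Lean document; each statement's English description precedes it below -/
import Mathlib

section
/- Let S and 𝒜 be measurable spaces, ν a probability measure on S, and κ a Markov kernel from S to 𝒜. Let f : S × 𝒜 → ℝ^d be measurable and square-integrable with respect to the joint measure ν ⊗ κ, let F(s) = ∫ f(s,a) dκ(s)(a), and let g ∈ ℝ^d be fixed. Then for any N ≥ 1, drawing s ~ ν and then a₁, …, a_N i.i.d. from κ(s): E[ ‖ (1/N) Σ_{k=1}^N f(s, a_k) − g ‖² ] = ∫_S ‖F(s) − g‖² dν(s) + (1/N) ∫_S ∫_𝒜 ‖f(s,a) − F(s)‖² dκ(s)(a) dν(s). In particular the within-state variance contribution decreases as 1/N. -/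
/-!
Conditionally on the state `s`, the sample mean of `N` i.i.d. draws from `κ s` has mean `F s`
and, coordinatewise, `1 / N` times the variance of a single draw. The bias–variance identity
`E‖Z - g‖² = ‖E Z - g‖² + ∑ᵢ Var Zᵢ` then gives the decomposition for each fixed state, and
integrating over `s ~ ν` finishes. In `s`, the terms `‖F s‖²` and `∫ ‖f (s, a) - F s‖² d(κ s)` are
integrable because they add up to the conditional second moment `∫ ‖f (s, a)‖² d(κ s)`, which is
integrable by Fubini.
-/

open MeasureTheory ProbabilityTheory

section EmpiricalMean

variable {Ω : Type*} [MeasurableSpace Ω] {μ : Measure Ω} [IsProbabilityMeasure μ]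

lemma integral_sub_const_sq {X : Ω → ℝ} (hX : MemLp X 2 μ) (c : ℝ) :
    ∫ ω, (X ω - c) ^ 2 ∂μ = (μ[X] - c) ^ 2 + Var[X; μ] := by
  have h := variance_eq_sub (X := fun ω => X ω - c) (hX.sub (memLp_const c))
  rw [variance_sub_const hX.aestronglyMeasurable,
    integral_sub (hX.integrable one_le_two) (integrable_const c)] at h
  simp only [Pi.pow_apply, integral_const, probReal_univ, one_smul] at h
  linarith

variable {N : ℕ}

lemma integral_smul_sum_comp_eval {E : Type*} [NormedAddCommGroup E] [NormedSpace ℝ E]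
    {h : Ω → E} (hh : Integrable h μ) (hN : N ≠ 0) :
    ∫ x, (1 / (N : ℝ)) • ∑ k : Fin N, h (x k) ∂(Measure.pi fun _ => μ) = ∫ ω, h ω ∂μ := by
  rw [integral_smul, integral_finsetSum _ fun k _ => integrable_comp_eval hh]
  simp_rw [integral_comp_eval (μ := fun _ : Fin N => μ) hh.aestronglyMeasurable]
  rw [Finset.sum_const, Finset.card_univ, Fintype.card_fin, ← Nat.cast_smul_eq_nsmul ℝ,
    smul_smul, one_div_mul_cancel (Nat.cast_ne_zero.mpr hN), one_smul]

lemma variance_mul_sum_comp_eval {X : Ω → ℝ} (hX : MemLp X 2 μ) :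
    Var[fun x => (1 / (N : ℝ)) * ∑ k : Fin N, X (x k); Measure.pi fun _ => μ]
      = Var[X; μ] / N := by
  rw [variance_const_mul, ← Finset.sum_fn, variance_sum_pi fun _ => hX, Finset.sum_const,
    Finset.card_univ, Fintype.card_fin, nsmul_eq_mul]
  rcases eq_or_ne (N : ℝ) 0 with hN | hN
  · simp [hN]
  · field_simp

namespace EuclideanSpace

variable {ι : Type*} [Fintype ι]

lemma integral_norm_sub_sq {Z : Ω → EuclideanSpace ℝ ι} (hZ : MemLp Z 2 μ)
    (g : EuclideanSpace ℝ ι) :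
    ∫ ω, ‖Z ω - g‖ ^ 2 ∂μ = ‖(∫ ω, Z ω ∂μ) - g‖ ^ 2 + ∑ i, Var[fun ω => Z ω i; μ] := by
  have hZi : ∀ i, MemLp (fun ω => Z ω i) 2 μ := hZ.eval_piLp
  have hsq : ∀ i, Integrable (fun ω => (Z ω i - g i) ^ 2) μ := fun i =>
    ((hZi i).sub (memLp_const (g i))).integrable_sq
  simp_rw [EuclideanSpace.real_norm_sq_eq, PiLp.sub_apply,
    eval_integral_piLp fun i => (hZi i).integrable one_le_two]
  rw [integral_finsetSum _ fun i _ => hsq i, ← Finset.sum_add_distrib]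
  exact Finset.sum_congr rfl fun i _ => integral_sub_const_sq (hZi i) (g i)

lemma integral_norm_sub_integral_sq {Z : Ω → EuclideanSpace ℝ ι} (hZ : MemLp Z 2 μ) :
    ∫ ω, ‖Z ω - ∫ ω', Z ω' ∂μ‖ ^ 2 ∂μ = ∑ i, Var[fun ω => Z ω i; μ] := by
  simpa using integral_norm_sub_sq hZ (∫ ω, Z ω ∂μ)

lemma integral_norm_sq {Z : Ω → EuclideanSpace ℝ ι} (hZ : MemLp Z 2 μ) :
    ∫ ω, ‖Z ω‖ ^ 2 ∂μ = ‖∫ ω, Z ω ∂μ‖ ^ 2 + ∫ ω, ‖Z ω - ∫ ω', Z ω' ∂μ‖ ^ 2 ∂μ := by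
  simpa [integral_norm_sub_integral_sq hZ] using integral_norm_sub_sq hZ 0

lemma integral_norm_smul_sum_comp_eval_sub_sq {h : Ω → EuclideanSpace ℝ ι} (hh : MemLp h 2 μ)
    (hN : N ≠ 0) (g : EuclideanSpace ℝ ι) :
    ∫ x, ‖(1 / (N : ℝ)) • (∑ k : Fin N, h (x k)) - g‖ ^ 2 ∂(Measure.pi fun _ => μ)
      = ‖(∫ ω, h ω ∂μ) - g‖ ^ 2 + (1 / (N : ℝ)) * ∫ ω, ‖h ω - ∫ ω', h ω' ∂μ‖ ^ 2 ∂μ := by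
  have hZ : MemLp (fun x : Fin N → Ω => (1 / (N : ℝ)) • ∑ k, h (x k)) 2
      (Measure.pi fun _ => μ) :=
    (memLp_finsetSum _ fun k _ =>
      hh.comp_measurePreserving (measurePreserving_eval _ k)).const_smul (1 / (N : ℝ))
  rw [integral_norm_sub_sq hZ, integral_smul_sum_comp_eval (hh.integrable one_le_two) hN,
    integral_norm_sub_integral_sq hh, Finset.mul_sum]
  congr 1
  refine Finset.sum_congr rfl fun i _ => ?_
  simp only [PiLp.smul_apply, smul_eq_mul, WithLp.ofLp_sum, Finset.sum_apply]
  rw [variance_mul_sum_comp_eval (hh.eval_piLp i), div_eq_inv_mul, one_div]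

end EuclideanSpace

end EmpiricalMean

section CompProd

variable {S 𝒜 : Type*} [MeasurableSpace S] [MeasurableSpace 𝒜] {ν : Measure S} {κ : Kernel S 𝒜}

lemma memLp_two_compProd_iff [SFinite ν] [IsSFiniteKernel κ] {E : Type*} [NormedAddCommGroup E]
    {f : S × 𝒜 → E} (hf : AEStronglyMeasurable f (ν ⊗ₘ κ)) :
    MemLp f 2 (ν ⊗ₘ κ) ↔ (∀ᵐ s ∂ν, MemLp (fun a => f (s, a)) 2 (κ s)) ∧
      Integrable (fun s => ∫ a, ‖f (s, a)‖ ^ 2 ∂(κ s)) ν := by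
  rw [memLp_two_iff_integrable_sq_norm hf,
    Measure.integrable_compProd_iff (f := fun x => ‖f x‖ ^ 2) (hf.norm.pow 2)]
  simp only [norm_pow, norm_norm]
  refine and_congr_left' (Filter.eventually_congr ?_)
  filter_upwards [AEStronglyMeasurable.ae_of_compProd (f := Function.curry f) hf] with s hs
  exact (memLp_two_iff_integrable_sq_norm hs).symm

lemma measurePreserving_fst_compProd [SFinite ν] [IsMarkovKernel κ] :
    MeasurePreserving Prod.fst (ν ⊗ₘ κ) ν :=
  ⟨measurable_fst, Measure.fst_compProd ν κ⟩

lemma MeasureTheory.AEStronglyMeasurable.integral_measure_compProd [SFinite ν]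
    [IsSFiniteKernel κ] {E : Type*} [NormedAddCommGroup E] [NormedSpace ℝ E] {f : S × 𝒜 → E}
    (hf : AEStronglyMeasurable f (ν ⊗ₘ κ)) :
    AEStronglyMeasurable (fun s => ∫ a, f (s, a) ∂(κ s)) ν :=
  hf.integral_kernel_compProd

variable {ι : Type*} [Fintype ι] {f : S × 𝒜 → EuclideanSpace ℝ ι} [SFinite ν] [IsMarkovKernel κ]

lemma ae_integral_norm_sq_eq (hf : MemLp f 2 (ν ⊗ₘ κ)) :
    ∀ᵐ s ∂ν, ∫ a, ‖f (s, a)‖ ^ 2 ∂(κ s) = ‖∫ a, f (s, a) ∂(κ s)‖ ^ 2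
      + ∫ a, ‖f (s, a) - ∫ a', f (s, a') ∂(κ s)‖ ^ 2 ∂(κ s) := by
  filter_upwards [((memLp_two_compProd_iff hf.aestronglyMeasurable).1 hf).1] with s hs
  exact EuclideanSpace.integral_norm_sq hs

lemma MeasureTheory.MemLp.integral_compProd (hf : MemLp f 2 (ν ⊗ₘ κ)) :
    MemLp (fun s => ∫ a, f (s, a) ∂(κ s)) 2 ν := by
  have hF := hf.aestronglyMeasurable.integral_measure_compProd
  refine (memLp_two_iff_integrable_sq_norm hF).2 <|
    ((memLp_two_compProd_iff hf.aestronglyMeasurable).1 hf).2.mono' (hF.norm.pow 2) ?_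
  filter_upwards [ae_integral_norm_sq_eq hf] with s hs
  rw [hs, Real.norm_of_nonneg (by positivity), le_add_iff_nonneg_right]
  exact integral_nonneg fun _ => by positivity

lemma MeasureTheory.MemLp.integrable_integral_norm_sub_integral_sq
    (hf : MemLp f 2 (ν ⊗ₘ κ)) :
    Integrable (fun s => ∫ a, ‖f (s, a) - ∫ a', f (s, a') ∂(κ s)‖ ^ 2 ∂(κ s)) ν := by
  have hF := hf.aestronglyMeasurable.integral_measure_compProd.comp_quasiMeasurePreserving
    (measurePreserving_fst_compProd (κ := κ)).quasiMeasurePreserving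
  refine ((memLp_two_compProd_iff hf.aestronglyMeasurable).1 hf).2.mono'
    ((hf.aestronglyMeasurable.sub hF).norm.pow 2).integral_measure_compProd ?_
  filter_upwards [ae_integral_norm_sq_eq hf] with s hs
  rw [hs, Real.norm_of_nonneg (integral_nonneg fun _ => by positivity), le_add_iff_nonneg_left]
  positivity

end CompProd

theorem all_action_mse_decomposition_general
    {d : ℕ} {S 𝒜 : Type*} [MeasurableSpace S] [MeasurableSpace 𝒜]
    (ν : Measure S) [IsProbabilityMeasure ν]
    (κ : Kernel S 𝒜) [IsMarkovKernel κ]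
    (f : S × 𝒜 → EuclideanSpace ℝ (Fin d))
    (hf : MemLp f 2 (ν ⊗ₘ κ))
    (g : EuclideanSpace ℝ (Fin d)) (N : ℕ) (hN : 1 ≤ N) :
    ∫ s, ∫ a, ‖(1 / (N : ℝ)) • (∑ k : Fin N, f (s, a k)) - g‖ ^ 2
        ∂(Measure.pi fun _ : Fin N => κ s) ∂ν =
      (∫ s, ‖(∫ a, f (s, a) ∂(κ s)) - g‖ ^ 2 ∂ν)
        + (1 / (N : ℝ)) *
            ∫ s, ∫ a, ‖f (s, a) - ∫ a', f (s, a') ∂(κ s)‖ ^ 2 ∂(κ s) ∂ν := by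
  have hbias : Integrable (fun s => ‖(∫ a, f (s, a) ∂(κ s)) - g‖ ^ 2) ν :=
    (hf.integral_compProd.sub (memLp_const g)).integrable_norm_pow two_ne_zero
  have hvar := hf.integrable_integral_norm_sub_integral_sq
  calc _ = ∫ s, (‖(∫ a, f (s, a) ∂(κ s)) - g‖ ^ 2 + (1 / (N : ℝ)) *
            ∫ a, ‖f (s, a) - ∫ a', f (s, a') ∂(κ s)‖ ^ 2 ∂(κ s)) ∂ν := by
        refine integral_congr_ae ?_
        filter_upwards [((memLp_two_compProd_iff hf.aestronglyMeasurable).1 hf).1] with s hs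
        exact EuclideanSpace.integral_norm_smul_sum_comp_eval_sub_sq hs (by omega) g
    _ = _ := by rw [integral_add hbias (hvar.const_mul _), integral_const_mul]

/-- **Two-stage MSE decomposition of the all-action Monte Carlo estimator.**
Draw a state `s ~ ν` and then `N` actions i.i.d. from the kernel `κ s`.
For square-integrable `f : S × 𝒜 → ℝ^d` with conditional mean
`F s = ∫ f (s, a) ∂(κ s)` and any fixed `g`,
`E[‖(1/N) ∑ₖ f (s, aₖ) − g‖²]
  = ∫ ‖F s − g‖² dν + (1/N) ∫∫ ‖f (s,a) − F s‖² d(κ s) dν`. -/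
theorem all_action_mse_decomposition
    {d : ℕ} {S 𝒜 : Type*} [MeasurableSpace S] [MeasurableSpace 𝒜]
    (ν : Measure S) [IsProbabilityMeasure ν]
    (κ : Kernel S 𝒜) [IsMarkovKernel κ]
    (f : S × 𝒜 → EuclideanSpace ℝ (Fin d)) (hfm : Measurable f)
    (hf : MemLp f 2 (ν ⊗ₘ κ))
    (g : EuclideanSpace ℝ (Fin d)) (N : ℕ) (hN : 1 ≤ N) :
    ∫ s, ∫ a, ‖(1 / (N : ℝ)) • (∑ k : Fin N, f (s, a k)) - g‖ ^ 2
        ∂(Measure.pi fun _ : Fin N => κ s) ∂ν =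
      (∫ s, ‖(∫ a, f (s, a) ∂(κ s)) - g‖ ^ 2 ∂ν)
        + (1 / (N : ℝ)) *
            ∫ s, ∫ a, ‖f (s, a) - ∫ a', f (s, a') ∂(κ s)‖ ^ 2 ∂(κ s) ∂ν :=
  all_action_mse_decomposition_general ν κ f hf g N hN
end

section
/- Let (Ω, F, P) be a probability space and m ⊆ F a sub-σ-algebra. Let u : Ω → ℝ^d be m-measurable with ‖u(ω)‖² ≤ M almost surely, A : Ω → ℝ m-measurable and square-integrable, and X : Ω → ℝ square-integrable with E[X | m] = A almost surely and E[(X − A)²] ≤ ξ. Define g = E[u A] and L = E[‖u A − g‖²]. Then the mean squared error of the estimator u X against g satisfies E[ ‖u X − g‖² ] ≤ L + M ξ. -/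
/-!
Write `X • u - g = (A • u - g) + (X - A) • u`. The inner product of the two summands is
`(X - A) * ⟪A • u - g, u⟫`: noise with zero conditional mean given `m` times an `m`-measurable
factor, so it integrates to zero. Pythagoras then splits the mean squared error into `L` plus
`E[(X - A)² ‖u‖²] ≤ M ξ`.
-/

open MeasureTheory ProbabilityTheory
open scoped ENNReal RealInnerProductSpace

section

variable {Ω E : Type*} [NormedAddCommGroup E] {m m₀ : MeasurableSpace Ω} {P : Measure Ω}

theorem memLp_top_of_norm_sq_le {u : Ω → E} (hu : AEStronglyMeasurable u P) {M : ℝ}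
    (hM : ∀ᵐ ω ∂P, ‖u ω‖ ^ 2 ≤ M) : MemLp u ∞ P :=
  memLp_top_of_bound hu √M <|
    hM.mono fun ω h => (abs_norm (u ω)).symm.trans_le (Real.abs_le_sqrt h)

theorem integral_norm_smul_sq_le [NormedSpace ℝ E] {u : Ω → E} {Y : Ω → ℝ} {M : ℝ}
    (hu : ∀ᵐ ω ∂P, ‖u ω‖ ^ 2 ≤ M) (hY : Integrable (fun ω => Y ω ^ 2) P) :
    ∫ ω, ‖Y ω • u ω‖ ^ 2 ∂P ≤ M * ∫ ω, Y ω ^ 2 ∂P := by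
  rw [← integral_const_mul]
  refine integral_mono_of_nonneg (.of_forall fun ω => by positivity) (hY.const_mul M) ?_
  filter_upwards [hu] with ω hω
  rw [norm_smul, mul_pow, Real.norm_eq_abs, sq_abs, mul_comm M]
  exact mul_le_mul_of_nonneg_left hω (sq_nonneg _)

variable [InnerProductSpace ℝ E]

theorem MeasureTheory.MemLp.integrable_inner {a b : Ω → E} (ha : MemLp a 2 P) (hb : MemLp b 2 P) :
    Integrable (fun ω => ⟪a ω, b ω⟫) P :=
  (L2.integrable_inner (ha.toLp a) (hb.toLp b)).congr <| by
    filter_upwards [ha.coeFn_toLp, hb.coeFn_toLp] with ω hω₁ hω₂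
    rw [hω₁, hω₂]

theorem integral_norm_add_sq_of_integral_inner_eq_zero {a b : Ω → E} (ha : MemLp a 2 P)
    (hb : MemLp b 2 P) (hab : ∫ ω, ⟪a ω, b ω⟫ ∂P = 0) :
    ∫ ω, ‖a ω + b ω‖ ^ 2 ∂P = ∫ ω, ‖a ω‖ ^ 2 ∂P + ∫ ω, ‖b ω‖ ^ 2 ∂P := by
  have ha₂ := (memLp_two_iff_integrable_sq_norm ha.1).1 ha
  have hb₂ := (memLp_two_iff_integrable_sq_norm hb.1).1 hb
  have hab₂ := (ha.integrable_inner hb).const_mul 2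
  have hsum : Integrable (fun ω => ‖a ω‖ ^ 2 + 2 * ⟪a ω, b ω⟫) P := ha₂.add hab₂
  simp_rw [norm_add_sq_real]
  rw [integral_add hsum hb₂, integral_add ha₂ hab₂, integral_const_mul, hab, mul_zero,
    add_zero]

theorem condExp_sub_eq_zero_of_condExp_eq (hm : m ≤ m₀) [IsFiniteMeasure P] {X A : Ω → ℝ}
    (hA : StronglyMeasurable[m] A) (hAint : Integrable A P) (hX : Integrable X P)
    (hXA : P[X | m] =ᵐ[P] A) : P[X - A | m] =ᵐ[P] 0 := by
  filter_upwards [condExp_sub hX hAint m, hXA] with ω h₁ h₂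
  rw [h₁, Pi.sub_apply, h₂, condExp_of_stronglyMeasurable hm hA hAint, sub_self, Pi.zero_apply]

theorem integral_mul_eq_zero_of_condExp_eq_zero (hm : m ≤ m₀) [IsFiniteMeasure P] {Y f : Ω → ℝ}
    (hf : StronglyMeasurable[m] f) (hYf : Integrable (Y * f) P) (hY : Integrable Y P)
    (hY₀ : P[Y | m] =ᵐ[P] 0) : ∫ ω, Y ω * f ω ∂P = 0 := by
  have hpull : P[Y * f | m] =ᵐ[P] 0 := by
    filter_upwards [condExp_mul_of_stronglyMeasurable_right hf hYf hY, hY₀] with ω h₁ h₂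
    simp [h₁, h₂]
  change ∫ ω, (Y * f) ω ∂P = 0
  rw [← integral_condExp hm, integral_congr_ae hpull, Pi.zero_def, integral_zero]

end

theorem reinforce_mse_bound_general
    {d : ℕ} {Ω : Type*} {F : MeasurableSpace Ω} (P : Measure Ω)
    [IsProbabilityMeasure P]
    (m : MeasurableSpace Ω) (hm : m ≤ F)
    (u : Ω → EuclideanSpace ℝ (Fin d)) (hum : Measurable[m] u)
    (M : ℝ) (hM : 0 ≤ M) (hubound : ∀ᵐ ω ∂P, ‖u ω‖ ^ 2 ≤ M)
    (A : Ω → ℝ) (hAm : Measurable[m] A) (hA : MemLp A 2 P)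
    (X : Ω → ℝ) (hX : MemLp X 2 P)
    (hcond : P[X | m] =ᵐ[P] A)
    (ξ : ℝ) (hξ : ∫ ω, (X ω - A ω) ^ 2 ∂P ≤ ξ)
    (g : EuclideanSpace ℝ (Fin d))
    (L : ℝ) (hL : L = ∫ ω, ‖A ω • u ω - g‖ ^ 2 ∂P) :
    ∫ ω, ‖X ω • u ω - g‖ ^ 2 ∂P ≤ L + M * ξ := by
  have hu : MemLp u ∞ P := memLp_top_of_norm_sq_le (hum.mono hm le_rfl).aestronglyMeasurable hubound
  have hAu : MemLp (fun ω => A ω • u ω - g) 2 P := (hu.smul hA).sub (memLp_const g)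
  have hYu : MemLp (fun ω => (X ω - A ω) • u ω) 2 P := hu.smul (hX.sub hA)
  have horth : ∫ ω, ⟪A ω • u ω - g, (X ω - A ω) • u ω⟫ ∂P = 0 := by
    have hint := hAu.integrable_inner hYu
    simp_rw [real_inner_smul_right] at hint ⊢
    exact integral_mul_eq_zero_of_condExp_eq_zero hm
      (((hAm.smul hum).sub measurable_const).inner hum).stronglyMeasurable hint
      (hX.sub hA |>.integrable one_le_two)
      (condExp_sub_eq_zero_of_condExp_eq hm hAm.stronglyMeasurable (hA.integrable one_le_two)
        (hX.integrable one_le_two) hcond)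
  calc ∫ ω, ‖X ω • u ω - g‖ ^ 2 ∂P
      = ∫ ω, ‖(A ω • u ω - g) + (X ω - A ω) • u ω‖ ^ 2 ∂P := by
        congr with ω
        rw [sub_smul]
        abel_nf
    _ = L + ∫ ω, ‖(X ω - A ω) • u ω‖ ^ 2 ∂P := by
        rw [hL, integral_norm_add_sq_of_integral_inner_eq_zero hAu hYu horth]
    _ ≤ L + M * ξ := by
        gcongr
        exact (integral_norm_smul_sq_le hubound (hX.sub hA).integrable_sq).trans
          (mul_le_mul_of_nonneg_left hξ hM)

/-- **MSE bound for the REINFORCE (likelihood ratio) estimator**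
(paper's Theorem 2). With score `u` that is `m`-measurable and bounded by
`‖u‖² ≤ M` a.s., true advantage `A` (`m`-measurable), rollout return `X`
satisfying `E[X | m] = A` a.s. with rollout noise `E[(X − A)²] ≤ ξ`, true
gradient `g = E[u A]`, and exact-advantage MSE `L = E[‖u A − g‖²]`, the MSE of
the estimator `u X` against `g` satisfies `E[‖u X − g‖²] ≤ L + M ξ`. -/
theorem reinforce_mse_bound
    {d : ℕ} {Ω : Type*} {F : MeasurableSpace Ω} (P : Measure Ω)
    [IsProbabilityMeasure P]
    (m : MeasurableSpace Ω) (hm : m ≤ F)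
    (u : Ω → EuclideanSpace ℝ (Fin d)) (hum : Measurable[m] u)
    (M : ℝ) (hM : 0 ≤ M) (hubound : ∀ᵐ ω ∂P, ‖u ω‖ ^ 2 ≤ M)
    (A : Ω → ℝ) (hAm : Measurable[m] A) (hA : MemLp A 2 P)
    (X : Ω → ℝ) (hX : MemLp X 2 P)
    (hcond : P[X | m] =ᵐ[P] A)
    (ξ : ℝ) (hξ : ∫ ω, (X ω - A ω) ^ 2 ∂P ≤ ξ)
    (g : EuclideanSpace ℝ (Fin d)) (hg : g = ∫ ω, A ω • u ω ∂P)
    (L : ℝ) (hL : L = ∫ ω, ‖A ω • u ω - g‖ ^ 2 ∂P) :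
    ∫ ω, ‖X ω • u ω - g‖ ^ 2 ∂P ≤ L + M * ξ :=
  reinforce_mse_bound_general P m hm u hum M hM hubound A hAm hA X hX hcond ξ hξ g L hL
end
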